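/- Let d ≥ 3 and x0 ∈ (0,1/4). The function F(x) = f2(∑_{i=1}^d f1(x_i)) can be expressed as a three-layer ReLU neural network f_W with widths m1 = 16d and m2 = d+2, whose path-norm with bias satisfies PN_b(W) ≤ (64/x0 + 1) d² + 1 when d is even and PN_b(W) ≤ (64/x0 + 1) d² + 64d/x0 + 2 when d is odd; moreover the path-norm without bias satisfies PN_nb(W) = 32 d²/x0 when d is even and PN_nb(W) = (32 d² + 32 d)/x0 when d is odd. -/

import Mathlib

noncomputable section

/-- `ReLU(t) = max(t, 0)`. -/
def relu (t : ℝ) : ℝ := max t 0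

/-- The set `B = {-3/2, -1/2, 1/2, 3/2}` as a finset of reals. -/
def Bset : Finset ℝ := {-3/2, -1/2, 1/2, 3/2}

/-- The two-layer bump network `f1`. -/
def f1 (x0 : ℝ) (x : ℝ) : ℝ :=
  ∑ β ∈ Bset, (Real.sign β / x0) *
    (relu (x - (β - 2 * x0)) - relu (x - (β - x0)) - relu (x - (β + x0)) +
      relu (x - (β + 2 * x0)))

/-- The two-layer zig-zag network `f2` (even and odd versions). -/
def f2 (d : ℕ) (x : ℝ) : ℝ :=
  if Even d then
    1 - relu x - relu (-x) - (-1 : ℝ) ^ (d / 2) * (relu (x - d) + relu (-x - d)) -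
      2 * ∑ i ∈ Finset.Icc 1 ((d - 2) / 2),
        (-1 : ℝ) ^ i * (relu (x - 2 * i) + relu (-x - 2 * i))
  else
    x + (-1 : ℝ) ^ ((d - 1) / 2) * (-relu (x - d) + relu (-x - d)) +
      2 * ∑ i ∈ Finset.range ((d - 1) / 2),
        (-1 : ℝ) ^ i * (-relu (x - (2 * i + 1)) + relu (-x - (2 * i + 1)))

/-- The three-layer discriminator `F(x) = f2(∑_i f1(x_i))`. -/
def Fdisc (d : ℕ) (x0 : ℝ) (x : EuclideanSpace ℝ (Fin d)) : ℝ :=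
  f2 d (∑ i, f1 x0 (x i))

/-- A three-layer ReLU neural network with weights
`W = ((θ_j, b_j)_j, (W_{i,j})_{i=1..m2, j=0..m1}, (w_i)_{i=0..m2})`. -/
structure ThreeLayerNet (d : ℕ) where
  m1 : ℕ
  m2 : ℕ
  θ : Fin m1 → EuclideanSpace ℝ (Fin d)
  b : Fin m1 → ℝ
  W : Fin m2 → Fin m1 → ℝ
  W0 : Fin m2 → ℝ
  w : Fin m2 → ℝ
  w0 : ℝ

/-- The function computed by a three-layer ReLU network. -/
def ThreeLayerNet.eval {d : ℕ} (N : ThreeLayerNet d) (x : EuclideanSpace ℝ (Fin d)) : ℝ :=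
  ∑ i, N.w i * relu (∑ j, N.W i j * relu ((inner ℝ (N.θ j) x : ℝ) - N.b j) + N.W0 i) + N.w0

/-- The path-norm with bias of a three-layer ReLU network. -/
def ThreeLayerNet.pnB {d : ℕ} (N : ThreeLayerNet d) : ℝ :=
  ∑ i, |N.w i| *
    (∑ j, |N.W i j| * Real.sqrt (‖N.θ j‖ ^ 2 + (N.b j) ^ 2) + |N.W0 i|) + |N.w0|

/-- The path-norm without bias of a three-layer ReLU network. -/
def ThreeLayerNet.pnNB {d : ℕ} (N : ThreeLayerNet d) : ℝ :=
  ∑ i, |N.w i| * ∑ j, |N.W i j| * ‖N.θ j‖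

/-!
`f1` is a univariate one-hidden-layer ReLU network with 16 neurons (four bumps of four ReLUs), so
`x ↦ ∑ₖ f1 (xₖ)` is realised by a first layer of `16 d` neurons `relu (xₖ - b)` with unit
directions `eₖ`. As a function of `t = ∑ₖ f1 (xₖ)`, `f2` is a one-hidden-layer network with
`d + 2` neurons `relu (±t + c)`, which supplies the second and third layers. For odd `d` the
linear term `t` of `f2` is realised as `relu (t + d) - d`, exact because `f1 ≥ -1`.
Since the directions are unit vectors and the second-layer signs are `±1`, both path norms
factor as `(∑ |output weights|) · d · ∑ |f1 slope|`, with an extra `√(1 + bias²)` in the sum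
with bias; the latter sum is at most `30 / x0` because `x0 < 1/4` keeps every bias below
`|β| + 1/2`.
-/

section

variable {ι κ : Type*} [Fintype ι] [Fintype κ]

def reluSum (s b : ι → ℝ) (x : ℝ) : ℝ := ∑ p, s p * relu (x - b p)

def reluNet (w σ c : κ → ℝ) (w0 t : ℝ) : ℝ := ∑ i, w i * relu (σ i * t + c i) + w0

namespace ThreeLayerNet

section mk

variable {d m1 m2 : ℕ} (θ : Fin m1 → EuclideanSpace ℝ (Fin d)) (b : Fin m1 → ℝ)
  (W : Fin m2 → Fin m1 → ℝ) (W0 w : Fin m2 → ℝ) (w0 : ℝ)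

theorem eval_mk (x : EuclideanSpace ℝ (Fin d)) : (mk m1 m2 θ b W W0 w w0).eval x =
    ∑ i, w i * relu (∑ j, W i j * relu (inner ℝ (θ j) x - b j) + W0 i) + w0 := rfl

theorem pnB_mk : (mk m1 m2 θ b W W0 w w0).pnB =
    ∑ i, |w i| * (∑ j, |W i j| * √(‖θ j‖ ^ 2 + b j ^ 2) + |W0 i|) + |w0| := rfl

theorem pnNB_mk : (mk m1 m2 θ b W W0 w w0).pnNB = ∑ i, |w i| * ∑ j, |W i j| * ‖θ j‖ := rfl

end mk

def ofCoordSum (d : ℕ) (s b : ι → ℝ) (w σ c : κ → ℝ) (w0 : ℝ) : ThreeLayerNet d where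
  m1 := Fintype.card (ι × Fin d)
  m2 := Fintype.card κ
  θ j := EuclideanSpace.single ((Fintype.equivFin (ι × Fin d)).symm j).2 1
  b j := b ((Fintype.equivFin (ι × Fin d)).symm j).1
  W i j := σ ((Fintype.equivFin κ).symm i) * s ((Fintype.equivFin (ι × Fin d)).symm j).1
  W0 i := c ((Fintype.equivFin κ).symm i)
  w i := w ((Fintype.equivFin κ).symm i)
  w0 := w0

variable {d : ℕ} {s b : ι → ℝ} {w σ c : κ → ℝ} {w0 : ℝ}

theorem eval_ofCoordSum (x : EuclideanSpace ℝ (Fin d)) :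
    (ofCoordSum d s b w σ c w0).eval x = reluNet w σ c w0 (∑ k, reluSum s b (x k)) := by
  rw [ofCoordSum, eval_mk, reluNet]
  congr 1
  refine Fintype.sum_equiv (Fintype.equivFin κ).symm _ _ fun i => ?_
  simp only [reluSum, Finset.mul_sum]
  rw [Finset.sum_comm, ← Fintype.sum_prod_type',
    ← Equiv.sum_comp (Fintype.equivFin (ι × Fin d)).symm]
  simp [EuclideanSpace.inner_single_left, mul_assoc]

theorem sum_equivFin_symm_prod_fst (f : ι → ℝ) :
    ∑ j, f ((Fintype.equivFin (ι × Fin d)).symm j).1 = d * ∑ p, f p := by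
  rw [Equiv.sum_comp (Fintype.equivFin (ι × Fin d)).symm (fun q => f q.1), Fintype.sum_prod_type]
  simp [Finset.mul_sum]

theorem pnNB_ofCoordSum (hσ : ∀ i, |σ i| = 1) :
    (ofCoordSum d s b w σ c w0).pnNB = (∑ i, |w i|) * (d * ∑ p, |s p|) := by
  rw [ofCoordSum, pnNB_mk, Finset.sum_mul]
  refine Fintype.sum_equiv (Fintype.equivFin κ).symm _ _ fun i => ?_
  simp only [abs_mul, hσ, one_mul, PiLp.norm_single, norm_one, mul_one]
  rw [sum_equivFin_symm_prod_fst (f := fun p => |s p|)]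

theorem pnB_ofCoordSum_le (hσ : ∀ i, |σ i| = 1) {S C : ℝ}
    (hS : ∑ p, |s p| * √(1 + b p ^ 2) ≤ S) (hc : ∀ i, |c i| ≤ C) :
    (ofCoordSum d s b w σ c w0).pnB ≤ (∑ i, |w i|) * (d * S + C) + |w0| := by
  rw [ofCoordSum, pnB_mk, Finset.sum_mul, ← Equiv.sum_comp (Fintype.equivFin κ).symm]
  simp only [abs_mul, hσ, one_mul, PiLp.norm_single, norm_one, one_pow]
  gcongr with i
  · rw [sum_equivFin_symm_prod_fst (f := fun p => |s p| * √(1 + b p ^ 2))]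
    gcongr
  · exact hc _

end ThreeLayerNet

end

theorem relu_of_nonneg {t : ℝ} (h : 0 ≤ t) : relu t = t := max_eq_left h

theorem relu_of_nonpos {t : ℝ} (h : t ≤ 0) : relu t = 0 := max_eq_right h

def bump (x0 β x : ℝ) : ℝ :=
  relu (x - (β - 2 * x0)) - relu (x - (β - x0)) - relu (x - (β + x0)) + relu (x - (β + 2 * x0))

def bumpCoeff : Fin 4 → ℝ := ![1, -1, -1, 1]

def bumpShift : Fin 4 → ℝ := ![-2, -1, 1, 2]

section bump

variable {x0 β x : ℝ}

theorem bump_eq_sum : bump x0 β x = ∑ q, bumpCoeff q * relu (x - (β + bumpShift q * x0)) := by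
  simp only [bump, Fin.sum_univ_four, bumpCoeff, bumpShift, Matrix.cons_val]
  ring_nf

theorem bump_mem_Icc (hx0 : 0 < x0) : bump x0 β x ∈ Set.Icc 0 x0 := by
  rw [bump]
  rcases le_total (x - (β - 2 * x0)) 0 with h1 | h1 <;>
  rcases le_total (x - (β - x0)) 0 with h2 | h2 <;>
  rcases le_total (x - (β + x0)) 0 with h3 | h3 <;>
  rcases le_total (x - (β + 2 * x0)) 0 with h4 | h4 <;>
  simp only [relu_of_nonneg, relu_of_nonpos, h1, h2, h3, h4] <;> constructor <;> linarith

theorem bump_eq_zero_of_le (hx0 : 0 < x0) (hx : x ≤ β - 2 * x0) : bump x0 β x = 0 := by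
  rw [bump, relu_of_nonpos (by linarith), relu_of_nonpos (by linarith),
    relu_of_nonpos (by linarith), relu_of_nonpos (by linarith)]
  ring

theorem bump_eq_zero_of_ge (hx0 : 0 < x0) (hx : β + 2 * x0 ≤ x) : bump x0 β x = 0 := by
  rw [bump, relu_of_nonneg (by linarith), relu_of_nonneg (by linarith),
    relu_of_nonneg (by linarith), relu_of_nonneg (by linarith)]
  ring

end bump

theorem abs_bumpShift_le (q : Fin 4) : |bumpShift q| ≤ 2 := by
  fin_cases q <;> norm_num [bumpShift]

theorem sum_Bset {M : Type*} [AddCommMonoid M] (g : ℝ → M) :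
    ∑ β ∈ Bset, g β = g (-3/2) + (g (-1/2) + (g (1/2) + g (3/2))) := by
  rw [Bset, Finset.sum_insert (by norm_num), Finset.sum_insert (by norm_num),
    Finset.sum_insert (by norm_num), Finset.sum_singleton]

theorem card_Bset : Bset.card = 4 := by
  rw [Finset.card_eq_sum_ones, sum_Bset]
  norm_num

theorem abs_sign_of_mem_Bset {β : ℝ} (hβ : β ∈ Bset) : |Real.sign β| = 1 := by
  have hβ0 : β ≠ 0 := by rintro rfl; norm_num [Bset] at hβ
  rcases Real.sign_apply_eq_of_ne_zero β hβ0 with h | h <;> simp [h]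

def f1Slope (x0 : ℝ) (p : Bset × Fin 4) : ℝ := Real.sign p.1 / x0 * bumpCoeff p.2

def f1Break (x0 : ℝ) (p : Bset × Fin 4) : ℝ := p.1 + bumpShift p.2 * x0

section f1

variable {x0 : ℝ}

theorem f1_eq_sum_bump (x : ℝ) : f1 x0 x = ∑ β ∈ Bset, Real.sign β / x0 * bump x0 β x := rfl

theorem f1_eq_reluSum : f1 x0 = reluSum (f1Slope x0) (f1Break x0) := by
  ext x
  simp only [f1_eq_sum_bump, reluSum, Fintype.sum_prod_type, f1Slope, f1Break, mul_assoc,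
    ← Finset.mul_sum, ← bump_eq_sum]
  exact (Finset.sum_coe_sort Bset _).symm

theorem neg_one_le_f1 (hx0 : 0 < x0) (hx0' : x0 ≤ 1 / 4) (x : ℝ) : -1 ≤ f1 x0 x := by
  rw [f1_eq_sum_bump, sum_Bset, Real.sign_of_neg (by norm_num), Real.sign_of_neg (by norm_num),
    Real.sign_of_pos (by norm_num), Real.sign_of_pos (by norm_num)]
  have h := fun β => bump_mem_Icc (β := β) (x := x) hx0
  -- the supports of the two negative bumps are disjoint since `4 * x0 ≤ 1`
  have hsupp : bump x0 (-3/2) x = 0 ∨ bump x0 (-1/2) x = 0 := by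
    rcases le_total x (-1) with hx | hx
    · exact .inr (bump_eq_zero_of_le hx0 (by linarith))
    · exact .inl (bump_eq_zero_of_ge hx0 (by linarith))
  have key : 0 ≤ x0 - bump x0 (-3/2) x - bump x0 (-1/2) x + bump x0 (1/2) x + bump x0 (3/2) x := by
    rcases hsupp with h0 | h0 <;>
      linarith [(h (-3/2)).2, (h (-1/2)).2, (h (1/2)).1, (h (3/2)).1]
  rw [← sub_nonneg]
  exact (div_nonneg key hx0.le).trans_eq (by field_simp; ring)

theorem abs_f1Slope (p : Bset × Fin 4) : |f1Slope x0 p| = |x0|⁻¹ := by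
  obtain ⟨⟨β, hβ⟩, q⟩ := p
  fin_cases q <;> simp [f1Slope, abs_div, abs_sign_of_mem_Bset hβ, bumpCoeff]

theorem sum_abs_f1Slope : ∑ p, |f1Slope x0 p| = 16 * |x0|⁻¹ := by
  simp [abs_f1Slope, card_Bset]

theorem abs_f1Break_le (hx0 : 0 < x0) (hx0' : x0 ≤ 1 / 4) (p : Bset × Fin 4) :
    |f1Break x0 p| ≤ |(p.1 : ℝ)| + 1 / 2 := by
  have := mul_le_mul_of_nonneg_right (abs_bumpShift_le p.2) hx0.le
  calc |f1Break x0 p| ≤ |(p.1 : ℝ)| + |bumpShift p.2 * x0| := abs_add_le _ _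
    _ ≤ |(p.1 : ℝ)| + 1 / 2 := by rw [abs_mul, abs_of_pos hx0]; linarith

theorem sum_abs_f1Slope_mul_sqrt_le (hx0 : 0 < x0) (hx0' : x0 ≤ 1 / 4) :
    ∑ p, |f1Slope x0 p| * √(1 + f1Break x0 p ^ 2) ≤ 30 / x0 := by
  simp only [abs_f1Slope, abs_of_pos hx0, ← Finset.mul_sum]
  have hsq (p : Bset × Fin 4) : f1Break x0 p ^ 2 ≤ (|(p.1 : ℝ)| + 1 / 2) ^ 2 :=
    sq_le_sq.mpr ((abs_f1Break_le hx0 hx0' p).trans (le_abs_self _))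
  have h5 : √5 ≤ 9 / 4 := Real.sqrt_le_iff.mpr (by norm_num)
  have h2 : √2 ≤ 3 / 2 := Real.sqrt_le_iff.mpr (by norm_num)
  calc x0⁻¹ * ∑ p, √(1 + f1Break x0 p ^ 2)
      ≤ x0⁻¹ * ∑ p : Bset × Fin 4, √(1 + (|(p.1 : ℝ)| + 1 / 2) ^ 2) := by
        gcongr x0⁻¹ * ∑ p, √(1 + ?_) with p
        exact hsq p
    _ = x0⁻¹ * (8 * √5 + 8 * √2) := by
        rw [Fintype.sum_prod_type]
        simp only [Finset.sum_const, Finset.card_univ, Fintype.card_fin]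
        rw [Finset.sum_coe_sort Bset (fun β => 4 • √(1 + (|β| + 1 / 2) ^ 2)), sum_Bset]
        congr 1
        norm_num
        ring
    _ ≤ 30 / x0 := by
        rw [div_eq_mul_inv, mul_comm]
        gcongr
        linarith

theorem neg_le_sum_f1 {d : ℕ} (hx0 : 0 < x0) (hx0' : x0 ≤ 1 / 4) (x : EuclideanSpace ℝ (Fin d)) :
    -(d : ℝ) ≤ ∑ k, f1 x0 (x k) := by
  simpa using Finset.sum_le_sum fun k (_ : k ∈ Finset.univ) => neg_one_le_f1 hx0 hx0' (x k)

end f1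

def plusMinus : Fin 2 → ℝ := ![1, -1]

section f2Even

abbrev F2EvenIdx (d : ℕ) : Type := Fin 4 ⊕ (Finset.Icc 1 ((d - 2) / 2) × Fin 2)

variable (d : ℕ)

def f2EvenW : F2EvenIdx d → ℝ :=
  Sum.elim ![-1, -1, -(-1) ^ (d / 2), -(-1) ^ (d / 2)] fun p => -2 * (-1) ^ (p.1 : ℕ)

def f2EvenSign : F2EvenIdx d → ℝ := Sum.elim ![1, -1, 1, -1] fun p => plusMinus p.2

def f2EvenBias : F2EvenIdx d → ℝ := Sum.elim ![0, 0, -d, -d] fun p => -2 * (p.1 : ℕ)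

variable {d}

theorem reluNet_f2Even (hd : Even d) :
    reluNet (f2EvenW d) (f2EvenSign d) (f2EvenBias d) 1 = f2 d := by
  ext t
  simp only [reluNet, f2, if_pos hd, Fintype.sum_sum_type, Fin.sum_univ_four,
    Fintype.sum_prod_type, Fin.sum_univ_two, f2EvenW, f2EvenSign, f2EvenBias, plusMinus,
    Sum.elim_inl, Sum.elim_inr, Matrix.cons_val, Finset.mul_sum, sub_eq_add_neg,
    ← Finset.sum_neg_distrib, one_mul, neg_mul, add_zero]
  rw [← Finset.sum_coe_sort (Finset.Icc 1 _), add_right_comm]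
  congr 1
  · ring
  · exact Finset.sum_congr rfl fun _ _ => by ring

theorem card_F2EvenIdx (hd : Even d) (hd2 : 2 ≤ d) : Fintype.card (F2EvenIdx d) = d + 2 := by
  simp only [Fintype.card_sum, Fintype.card_prod, Fintype.card_fin, Fintype.card_coe, Nat.card_Icc]
  obtain ⟨k, rfl⟩ := hd
  omega

theorem abs_f2EvenSign (i : F2EvenIdx d) : |f2EvenSign d i| = 1 := by
  rcases i with i | ⟨_, e⟩
  · fin_cases i <;> simp [f2EvenSign]
  · fin_cases e <;> simp [f2EvenSign, plusMinus]

theorem abs_f2EvenBias_le (i : F2EvenIdx d) : |f2EvenBias d i| ≤ d := by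
  rcases i with i | ⟨⟨k, hk⟩, e⟩
  · fin_cases i <;> simp [f2EvenBias]
  · simp only [f2EvenBias, Sum.elim_inr, abs_mul, abs_neg, abs_two, Nat.abs_cast]
    have := (Finset.mem_Icc.mp hk).2
    exact_mod_cast (by omega : 2 * k ≤ d)

theorem sum_abs_f2EvenW (hd : Even d) (hd2 : 2 ≤ d) : ∑ i, |f2EvenW d i| = 2 * d := by
  simp only [f2EvenW, Fintype.sum_sum_type, Fin.sum_univ_four, Sum.elim_inl, Sum.elim_inr,
    Matrix.cons_val, abs_neg, abs_mul, abs_pow, abs_one, one_pow, abs_two, mul_one,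
    Finset.sum_const, Finset.card_univ, Fintype.card_prod, Fintype.card_coe, Fintype.card_fin,
    Nat.card_Icc, nsmul_eq_mul]
  obtain ⟨k, rfl⟩ := hd
  rw [show (k + k - 2) / 2 + 1 - 1 = k - 1 by omega]
  push_cast [show 1 ≤ k by omega]
  ring

end f2Even

section f2Odd

abbrev F2OddIdx (d : ℕ) : Type := Fin 3 ⊕ (Finset.range ((d - 1) / 2) × Fin 2)

variable (d : ℕ)

/-- The neuron `relu (-t - d)` vanishes on `t ≥ -d`; its weight `2` is free and is chosen so that
`∑ |w| = 2 d + 2`. -/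
def f2OddW : F2OddIdx d → ℝ :=
  Sum.elim ![1, -(-1) ^ ((d - 1) / 2), 2] fun p => -2 * (-1) ^ (p.1 : ℕ) * plusMinus p.2

def f2OddSign : F2OddIdx d → ℝ := Sum.elim ![1, 1, -1] fun p => plusMinus p.2

def f2OddBias : F2OddIdx d → ℝ := Sum.elim ![d, -d, -d] fun p => -(2 * (p.1 : ℕ) + 1)

variable {d}

theorem reluNet_f2Odd (hd : Odd d) {t : ℝ} (ht : -d ≤ t) :
    reluNet (f2OddW d) (f2OddSign d) (f2OddBias d) (-d) t = f2 d t := by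
  simp only [reluNet, f2, if_neg (Nat.not_even_iff_odd.mpr hd), Fintype.sum_sum_type,
    Fin.sum_univ_three, Fintype.sum_prod_type, Fin.sum_univ_two, f2OddW, f2OddSign, f2OddBias,
    plusMinus, Sum.elim_inl, Sum.elim_inr, Matrix.cons_val, Finset.mul_sum, one_mul, neg_mul,
    sub_eq_add_neg]
  rw [relu_of_nonneg (by linarith), relu_of_nonpos (by linarith : -t + -d ≤ 0),
    ← Finset.sum_coe_sort (Finset.range _), add_right_comm]
  congr 1
  · ring
  · exact Finset.sum_congr rfl fun _ _ => by ring

theorem card_F2OddIdx (hd : Odd d) : Fintype.card (F2OddIdx d) = d + 2 := by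
  simp only [Fintype.card_sum, Fintype.card_prod, Fintype.card_fin, Fintype.card_coe,
    Finset.card_range]
  obtain ⟨k, rfl⟩ := hd
  omega

theorem abs_f2OddSign (i : F2OddIdx d) : |f2OddSign d i| = 1 := by
  rcases i with i | ⟨_, e⟩
  · fin_cases i <;> simp [f2OddSign]
  · fin_cases e <;> simp [f2OddSign, plusMinus]

theorem abs_f2OddBias_le (i : F2OddIdx d) : |f2OddBias d i| ≤ d := by
  rcases i with i | ⟨⟨k, hk⟩, e⟩
  · fin_cases i <;> simp [f2OddBias]
  · simp only [f2OddBias, Sum.elim_inr, abs_neg]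
    have := Finset.mem_range.mp hk
    rw [abs_of_nonneg (by positivity)]
    exact_mod_cast (by omega : 2 * k + 1 ≤ d)

theorem sum_abs_f2OddW (hd : Odd d) : ∑ i, |f2OddW d i| = 2 * d + 2 := by
  simp only [f2OddW, Fintype.sum_sum_type, Fin.sum_univ_three, Fintype.sum_prod_type,
    Fin.sum_univ_two, plusMinus, Sum.elim_inl, Sum.elim_inr, Matrix.cons_val, abs_neg, abs_mul,
    abs_pow, abs_one, one_pow, abs_two, mul_one, Finset.sum_const, Finset.card_univ,
    Fintype.card_coe, Finset.card_range, nsmul_eq_mul]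
  obtain ⟨k, rfl⟩ := hd
  rw [show (2 * k + 1 - 1) / 2 = k by omega]
  push_cast
  ring

end f2Odd

section discriminator

variable {d : ℕ} {x0 : ℝ}

theorem card_f1Idx_prod : Fintype.card ((Bset × Fin 4) × Fin d) = 16 * d := by
  simp [card_Bset]

theorem exists_net_eq_Fdisc_of_even (hd : Even d) (hd2 : 2 ≤ d) (hx0 : 0 < x0)
    (hx0' : x0 ≤ 1 / 4) :
    ∃ N : ThreeLayerNet d, N.m1 = 16 * d ∧ N.m2 = d + 2 ∧ (∀ x, N.eval x = Fdisc d x0 x) ∧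
      N.pnB ≤ (64 / x0 + 1) * (d : ℝ) ^ 2 + 1 ∧ N.pnNB = 32 * (d : ℝ) ^ 2 / x0 := by
  have hx0inv : 4 ≤ x0⁻¹ := by rw [le_inv_comm₀ (by norm_num) hx0]; linarith
  refine ⟨.ofCoordSum d (f1Slope x0) (f1Break x0) (f2EvenW d) (f2EvenSign d) (f2EvenBias d) 1,
    card_f1Idx_prod, card_F2EvenIdx hd hd2, fun x => ?_, ?_, ?_⟩
  · rw [ThreeLayerNet.eval_ofCoordSum, ← f1_eq_reluSum, reluNet_f2Even hd]
    rfl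
  · calc _ ≤ 2 * d * (d * (30 / x0) + d) + |1| := by
          rw [← sum_abs_f2EvenW hd hd2]
          exact ThreeLayerNet.pnB_ofCoordSum_le abs_f2EvenSign
            (sum_abs_f1Slope_mul_sqrt_le hx0 hx0') abs_f2EvenBias_le
      _ ≤ _ := by
          simp only [abs_one, div_eq_mul_inv]
          nlinarith [sq_nonneg (d : ℝ)]
  · rw [ThreeLayerNet.pnNB_ofCoordSum abs_f2EvenSign, sum_abs_f2EvenW hd hd2, sum_abs_f1Slope,
      abs_of_pos hx0]
    ring

theorem exists_net_eq_Fdisc_of_odd (hd : Odd d) (hx0 : 0 < x0) (hx0' : x0 ≤ 1 / 4) :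
    ∃ N : ThreeLayerNet d, N.m1 = 16 * d ∧ N.m2 = d + 2 ∧ (∀ x, N.eval x = Fdisc d x0 x) ∧
      N.pnB ≤ (64 / x0 + 1) * (d : ℝ) ^ 2 + 64 * d / x0 + 2 ∧
      N.pnNB = (32 * (d : ℝ) ^ 2 + 32 * d) / x0 := by
  have hx0inv : 4 ≤ x0⁻¹ := by rw [le_inv_comm₀ (by norm_num) hx0]; linarith
  refine ⟨.ofCoordSum d (f1Slope x0) (f1Break x0) (f2OddW d) (f2OddSign d) (f2OddBias d) (-d),
    card_f1Idx_prod, card_F2OddIdx hd, fun x => ?_, ?_, ?_⟩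
  · rw [ThreeLayerNet.eval_ofCoordSum, ← f1_eq_reluSum,
      reluNet_f2Odd hd (neg_le_sum_f1 hx0 hx0' x)]
    rfl
  · calc _ ≤ (2 * d + 2) * (d * (30 / x0) + d) + |-(d : ℝ)| := by
          rw [← sum_abs_f2OddW hd]
          exact ThreeLayerNet.pnB_ofCoordSum_le abs_f2OddSign
            (sum_abs_f1Slope_mul_sqrt_le hx0 hx0') abs_f2OddBias_le
      _ ≤ _ := by
          simp only [abs_neg, Nat.abs_cast, div_eq_mul_inv]
          nlinarith [sq_nonneg (d : ℝ), (Nat.cast_nonneg d : (0 : ℝ) ≤ d)]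
  · rw [ThreeLayerNet.pnNB_ofCoordSum abs_f2OddSign, sum_abs_f2OddW hd, sum_abs_f1Slope,
      abs_of_pos hx0]
    ring

end discriminator

theorem path_norm_F (d : ℕ) (hd : 3 ≤ d) (x0 : ℝ) (hx0 : x0 ∈ Set.Ioo (0 : ℝ) (1/4)) :
    ∃ N : ThreeLayerNet d,
      N.m1 = 16 * d ∧ N.m2 = d + 2 ∧
      (∀ x : EuclideanSpace ℝ (Fin d), N.eval x = Fdisc d x0 x) ∧
      (Even d → N.pnB ≤ (64 / x0 + 1) * (d : ℝ) ^ 2 + 1) ∧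
      (Odd d → N.pnB ≤ (64 / x0 + 1) * (d : ℝ) ^ 2 + 64 * d / x0 + 2) ∧
      (Even d → N.pnNB = 32 * (d : ℝ) ^ 2 / x0) ∧
      (Odd d → N.pnNB = (32 * (d : ℝ) ^ 2 + 32 * d) / x0) := by
  obtain ⟨hx0, hx0'⟩ := hx0
  rcases Nat.even_or_odd d with he | ho
  · obtain ⟨N, hm1, hm2, heval, hB, hNB⟩ :=
      exists_net_eq_Fdisc_of_even he (by omega) hx0 hx0'.le
    have hodd : ¬Odd d := Nat.not_odd_iff_even.mpr he
    exact ⟨N, hm1, hm2, heval, fun _ => hB, hodd.elim, fun _ => hNB, hodd.elim⟩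
  · obtain ⟨N, hm1, hm2, heval, hB, hNB⟩ := exists_net_eq_Fdisc_of_odd ho hx0 hx0'.le
    have heven : ¬Even d := Nat.not_even_iff_odd.mpr ho
    exact ⟨N, hm1, hm2, heval, heven.elim, fun _ => hB, heven.elim, fun _ => hNB⟩

end
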